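/- Let Δ be a valued structure with finite domain D. Let m ∈ ℕ, and suppose the promise valued template (Δ, Γ) (where Γ has possibly infinite domain C) has a fully symmetric promise fractional polymorphism ω of arity m. Then the multiset-structure P^m(Δ) is fractionally homomorphic to Γ. -/

import Mathlib

open scoped BigOperators NNReal
open Function

noncomputable section

/-- Costs take values in `ℚ ∪ {+∞}`. -/
abbrev Cost := WithTop ℚ

/-- Embedding of extended rationals into the extended reals. -/
def toE (x : Cost) : EReal := WithTop.recTopCoe ⊤ (fun q : ℚ => ((q : ℝ) : EReal)) x

/-- A valued structure over signature `τ` (with arities `ar`) and domain `C`. -/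
structure VStruct (τ : Type) (ar : τ → ℕ) (C : Type) where
  cost : (f : τ) → ((Fin (ar f)) → C) → Cost

/-- A fractional homomorphism from `Δ` (domain `D`) to `Γ` (domain `C`): a discrete
probability measure on maps `D → C` (given by its weight function, which has countable,
non-empty support and total mass `1`) such that for every function symbol and every tuple
the expected cost in `Γ` is at most the cost in `Δ`. -/
structure FracHom {τ : Type} {ar : τ → ℕ} {D C : Type}
    (Δ : VStruct τ ar D) (Γ : VStruct τ ar C) where
  w : (D → C) → ℝ≥0
  countable_support : (Function.support w).Countable
  support_nonempty : (Function.support w).Nonempty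
  total : HasSum w 1
  le : ∀ (f : τ) (a : Fin (ar f) → D),
    (∑' h : D → C, ((w h : ℝ) : EReal) * toE (Γ.cost f (fun i => h (a i))))
      ≤ toE (Δ.cost f a)

/-- An `m`-ary promise fractional polymorphism of a pair `(Δ, Γ)`: a probability
distribution `wI` supported exactly on the `m` projections (recorded by its weights on
indices), together with a discrete probability measure `wO` on maps `(Fin m → D) → C`
with countable non-empty support, satisfying the expected-cost inequality. -/
structure PFracPol {τ : Type} {ar : τ → ℕ} {D C : Type}
    (Δ : VStruct τ ar D) (Γ : VStruct τ ar C) (m : ℕ) where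
  wI : Fin m → ℝ≥0
  wI_pos : ∀ i, 0 < wI i
  wI_total : ∑ i, wI i = 1
  wO : ((Fin m → D) → C) → ℝ≥0
  wO_countable : (Function.support wO).Countable
  wO_nonempty : (Function.support wO).Nonempty
  wO_total : HasSum wO 1
  le : ∀ (f : τ) (a : Fin m → (Fin (ar f) → D)),
    (∑' g : (Fin m → D) → C,
        ((wO g : ℝ) : EReal) * toE (Γ.cost f (fun t => g (fun i => a i t))))
      ≤ ∑ i, ((wI i : ℝ) : EReal) * toE (Δ.cost f (a i))

open Classical in
/-- The multiset-structure `P^m(Δ)`: its domain consists of multisets over `D` of size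
`m`, and each cost is `1/m` times the minimum, over tuples `t^1, …, t^k ∈ D^m` whose
multisets of coordinates realise the given multisets, of the total cost. -/
def msStruct {τ : Type} {ar : τ → ℕ} {D : Type} [Fintype D] [DecidableEq D]
    (Δ : VStruct τ ar D) (m : ℕ) : VStruct τ ar (Sym D m) where
  cost f p :=
    (((1 : ℚ) / m : ℚ) : Cost) *
      (Finset.univ.inf fun t : Fin (ar f) → Fin m → D =>
        if (∀ ℓ, Multiset.map (t ℓ) (Finset.univ : Finset (Fin m)).val = ((p ℓ) : Multiset D))
        then ∑ i : Fin m, Δ.cost f (fun ℓ => t ℓ i) else ⊤)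

/-- Full symmetry of a promise fractional polymorphism: every map in its output support
is invariant under all permutations of its `m` arguments. -/
def PFracPol.IsFullySym {τ : Type} {ar : τ → ℕ} {D C : Type}
    {Δ : VStruct τ ar D} {Γ : VStruct τ ar C} {m : ℕ} (ω : PFracPol Δ Γ m) : Prop :=
  ∀ g ∈ Function.support ω.wO, ∀ π : Equiv.Perm (Fin m),
    ∀ x : Fin m → D, g (fun i => x (π i)) = g x

/-!
Full symmetry means every map in the support of `ω.wO` factors through the multiset map
`Sym.ofFn : (Fin m → D) → Sym D m`, so `ω.wO` pulls back to a distribution on maps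
`Sym D m → C`. If tuples `t ℓ` realise the multisets `a ℓ`, symmetry also makes the expected
cost of `ω` invariant under permuting the `m` arguments, so the polymorphism inequality holds
against every cyclic shift of the input weights `ω.wI`; one of these shifts does no worse than
their average, which has uniform weights `1/m` and is the cost of `a` in `P^m(Δ)`.
-/

open Finset

lemma exists_perm_comp_eq_of_map_univ_eq {ι α : Type*} [Fintype ι] {x y : ι → α}
    (h : univ.val.map x = univ.val.map y) : ∃ σ : Equiv.Perm ι, x ∘ σ = y := by
  classical
  have hfiber (a : α) : Fintype.card {i // y i = a} = Fintype.card {i // x i = a} := by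
    have := congrArg (Multiset.count a) h
    simp only [Multiset.count_map, ← Finset.filter_val, Finset.card_val] at this
    simpa [Fintype.card_subtype, eq_comm] using this.symm
  exact ⟨Equiv.ofFiberEquiv fun a => Fintype.equivOfCardEq (hfiber a),
    funext (Equiv.ofFiberEquiv_map _)⟩

lemma exists_add_weighted_sum_le_average {G K : Type*} [AddGroup G] [Fintype G] [Field K]
    [LinearOrder K] [IsStrictOrderedRing K] (w c : G → K) (hw : ∑ i, w i = 1) :
    ∃ k, ∑ i, w i * c (k + i) ≤ (∑ j, c j) / Fintype.card G := by
  have hshift (i : G) : ∑ k, c (k + i) = ∑ j, c j :=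
    Fintype.sum_equiv (Equiv.addRight i) _ _ fun _ => rfl
  have hsum : ∑ k, ∑ i, w i * c (k + i) = ∑ _k : G, (∑ j, c j) / Fintype.card G := by
    rw [Finset.sum_comm]
    simp_rw [← Finset.mul_sum, hshift, ← Finset.sum_mul, hw, one_mul, Finset.sum_const,
      Finset.card_univ, nsmul_eq_mul]
    field_simp
  obtain ⟨k, -, hk⟩ := Finset.exists_le_of_sum_le Finset.univ_nonempty hsum.le
  exact ⟨k, hk⟩

lemma EReal.coe_finsetSum {ι : Type*} (s : Finset ι) (f : ι → ℝ) :
    ((∑ i ∈ s, f i : ℝ) : EReal) = ∑ i ∈ s, (f i : EReal) :=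
  map_sum (⟨⟨Real.toEReal, EReal.coe_zero⟩, EReal.coe_add⟩ : ℝ →+ EReal) f s

namespace Sym

variable {α β : Type*} {m : ℕ}

def ofFn (x : Fin m → α) : Sym α m := ⟨univ.val.map x, by simp⟩

lemma ofFn_surjective : Function.Surjective (ofFn : (Fin m → α) → Sym α m) := by
  rintro ⟨s, rfl⟩
  refine ⟨fun i => s.toList[i.cast s.length_toList.symm], Sym.ext ?_⟩
  conv_rhs => rw [← s.coe_toList]
  exact congrArg _ (List.ext_getElem (by simp) (by simp))

lemma ofFn_comp_perm (x : Fin m → α) (σ : Equiv.Perm (Fin m)) : ofFn (x ∘ σ) = ofFn x :=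
  Sym.ext <| by
    change univ.val.map (x ∘ σ) = univ.val.map x
    rw [Fin.univ_val_map, Fin.univ_val_map]
    exact Multiset.coe_eq_coe.mpr (σ.ofFn_comp_perm x)

lemma exists_perm_comp_eq_of_ofFn_eq {x y : Fin m → α} (h : ofFn x = ofFn y) :
    ∃ σ : Equiv.Perm (Fin m), x ∘ σ = y :=
  exists_perm_comp_eq_of_map_univ_eq (congrArg Subtype.val h)

lemma exists_comp_ofFn_eq {g : (Fin m → α) → β}
    (hg : ∀ (σ : Equiv.Perm (Fin m)) x, g (x ∘ σ) = g x) :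
    ∃ h : Sym α m → β, h ∘ ofFn = g := by
  refine ⟨g ∘ Function.surjInv ofFn_surjective, funext fun x => ?_⟩
  obtain ⟨σ, hσ⟩ :=
    exists_perm_comp_eq_of_ofFn_eq (Function.surjInv_eq ofFn_surjective (ofFn x))
  exact (hg σ _).symm.trans (congrArg g hσ)

end Sym

lemma toE_coe (q : ℚ) : toE q = ((q : ℝ) : EReal) := rfl

lemma toE_top : toE ⊤ = ⊤ := rfl

namespace PFracPol

variable {τ : Type} {ar : τ → ℕ} {D C : Type} {Δ : VStruct τ ar D} {Γ : VStruct τ ar C}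
  {m : ℕ}

lemma arity_ne_zero (ω : PFracPol Δ Γ m) : m ≠ 0 := by
  rintro rfl
  simpa using ω.wI_total

def symWeight (ω : PFracPol Δ Γ m) (h : Sym D m → C) : ℝ≥0 := ω.wO (h ∘ Sym.ofFn)

lemma countable_support_symWeight (ω : PFracPol Δ Γ m) :
    (Function.support ω.symWeight).Countable :=
  ω.wO_countable.preimage Sym.ofFn_surjective.injective_comp_right

variable {ω : PFracPol Δ Γ m}

lemma IsFullySym.support_subset_range (hω : ω.IsFullySym) :
    Function.support ω.wO ⊆ Set.range fun h : Sym D m → C => h ∘ Sym.ofFn :=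
  fun g hg => Sym.exists_comp_ofFn_eq (hω g hg)

lemma IsFullySym.support_symWeight_nonempty (hω : ω.IsFullySym) :
    (Function.support ω.symWeight).Nonempty := by
  obtain ⟨g, hg⟩ := ω.wO_nonempty
  obtain ⟨h, rfl⟩ := hω.support_subset_range hg
  exact ⟨h, hg⟩

lemma IsFullySym.hasSum_symWeight (hω : ω.IsFullySym) : HasSum ω.symWeight 1 :=
  (Sym.ofFn_surjective.injective_comp_right.hasSum_iff fun _ hg =>
    Function.notMem_support.mp fun hw => hg (hω.support_subset_range hw)).mpr ω.wO_total

lemma IsFullySym.tsum_symWeight_mul (hω : ω.IsFullySym) (F : ((Fin m → D) → C) → EReal) :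
    ∑' h, ((ω.symWeight h : ℝ) : EReal) * F (h ∘ Sym.ofFn)
      = ∑' g, ((ω.wO g : ℝ) : EReal) * F g :=
  Sym.ofFn_surjective.injective_comp_right.tsum_eq (f := fun g => ((ω.wO g : ℝ) : EReal) * F g)
    fun _ hg => hω.support_subset_range fun hw => hg (by simp [hw])

lemma IsFullySym.expected_cost_le_perm (hω : ω.IsFullySym) (f : τ)
    (t : Fin (ar f) → Fin m → D) (σ : Equiv.Perm (Fin m)) :
    ∑' h, ((ω.symWeight h : ℝ) : EReal) * toE (Γ.cost f fun ℓ => h (Sym.ofFn (t ℓ)))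
      ≤ ∑ i, ((ω.wI i : ℝ) : EReal) * toE (Δ.cost f fun ℓ => t ℓ (σ i)) := by
  have := hω.tsum_symWeight_mul fun g => toE (Γ.cost f fun ℓ => g (t ℓ ∘ σ))
  simp only [Function.comp_apply, Sym.ofFn_comp_perm] at this
  rw [this]
  exact ω.le f fun i ℓ => t ℓ (σ i)

lemma IsFullySym.expected_cost_le_average (hω : ω.IsFullySym) (f : τ)
    (t : Fin (ar f) → Fin m → D) :
    ∑' h, ((ω.symWeight h : ℝ) : EReal) * toE (Γ.cost f fun ℓ => h (Sym.ofFn (t ℓ)))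
      ≤ toE (((1 / m : ℚ) : Cost) * ∑ i, Δ.cost f fun ℓ => t ℓ i) := by
  have hm := ω.arity_ne_zero
  have : NeZero m := ⟨hm⟩
  by_cases hfin : ∀ i, Δ.cost f (fun ℓ => t ℓ i) ≠ ⊤
  · choose c hc using fun i => WithTop.ne_top_iff_exists.mp (hfin i)
    obtain ⟨k, hk⟩ := exists_add_weighted_sum_le_average (fun i => (ω.wI i : ℝ))
      (fun i => (c i : ℝ)) (by exact_mod_cast ω.wI_total)
    calc _ ≤ ∑ i, ((ω.wI i : ℝ) : EReal) * toE (Δ.cost f fun ℓ => t ℓ (k + i)) :=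
          hω.expected_cost_le_perm f t (Equiv.addLeft k)
      _ = ((∑ i, (ω.wI i : ℝ) * c (k + i) : ℝ) : EReal) := by
          simp [← hc, toE_coe, EReal.coe_finsetSum]
      _ ≤ (((∑ j, (c j : ℝ)) / m : ℝ) : EReal) := by simpa using hk
      _ = toE ((1 / m * ∑ j, c j : ℚ) : Cost) := by
          rw [toE_coe, EReal.coe_eq_coe_iff]
          push_cast
          ring
      _ = toE (((1 / m : ℚ) : Cost) * ∑ i, Δ.cost f fun ℓ => t ℓ i) := by
          simp only [← hc, WithTop.coe_mul, WithTop.coe_sum]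
  · obtain ⟨i, hi⟩ : ∃ i, Δ.cost f (fun ℓ => t ℓ i) = ⊤ := by simpa using hfin
    rw [WithTop.sum_eq_top.mpr ⟨i, mem_univ i, hi⟩, WithTop.mul_top (by simpa using hm),
      toE_top]
    exact le_top

end PFracPol

lemma le_toE_msStruct_cost {τ : Type} {ar : τ → ℕ} {D : Type} [Fintype D] [DecidableEq D]
    {Δ : VStruct τ ar D} {m : ℕ} (hm : m ≠ 0) {f : τ} {a : Fin (ar f) → Sym D m}
    {x : EReal}
    (h : ∀ t : Fin (ar f) → Fin m → D, (∀ ℓ, Sym.ofFn (t ℓ) = a ℓ) →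
      x ≤ toE (((1 / m : ℚ) : Cost) * ∑ i, Δ.cost f fun ℓ => t ℓ i)) :
    x ≤ toE ((msStruct Δ m).cost f a) := by
  have htop : x ≤ toE (((1 / m : ℚ) : Cost) * ⊤) := by
    rw [WithTop.mul_top (by simpa using hm), toE_top]
    exact le_top
  refine Finset.inf_induction (p := fun y => x ≤ toE (((1 / m : ℚ) : Cost) * y)) htop ?_ ?_
  · intro y₁ h₁ y₂ h₂
    rcases le_total y₁ y₂ with hy | hy
    · rwa [inf_eq_left.mpr hy]
    · rwa [inf_eq_right.mpr hy]
  · intro t _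
    split_ifs with ht
    · exact h t fun ℓ => Sym.ext (ht ℓ)
    · exact htop

theorem msStruct_fracHom_general {τ : Type} {ar : τ → ℕ} {D C : Type} [Fintype D] [DecidableEq D]
    (Δ : VStruct τ ar D) (Γ : VStruct τ ar C)
    (m : ℕ) (ω : PFracPol Δ Γ m) (hω : ω.IsFullySym) :
    Nonempty (FracHom (msStruct Δ m) Γ) :=
  ⟨{ w := ω.symWeight
     countable_support := ω.countable_support_symWeight
     support_nonempty := hω.support_symWeight_nonempty
     total := hω.hasSum_symWeight
     le := fun f a => le_toE_msStruct_cost ω.arity_ne_zero fun t ht => by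
       simpa only [← ht] using hω.expected_cost_le_average f t }⟩

/-- if the promise valued template `(Δ, Γ)` (with `Δ` over a finite domain)
has a fully symmetric promise fractional polymorphism of arity `m`, then the
multiset-structure `P^m(Δ)` is fractionally homomorphic to `Γ`. -/
theorem msStruct_fracHom {τ : Type} {ar : τ → ℕ} {D C : Type} [Fintype D] [DecidableEq D]
    (Δ : VStruct τ ar D) (Γ : VStruct τ ar C) (_template : Nonempty (FracHom Δ Γ))
    (m : ℕ) (ω : PFracPol Δ Γ m) (hω : ω.IsFullySym) :
    Nonempty (FracHom (msStruct Δ m) Γ) :=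
  msStruct_fracHom_general Δ Γ m ω hω
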